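/- arXiv:2103.02834 — 10 statements merged into one kernel-verified Lean document; each statement's English description precedes it below -/
import Mathlib

section
/- Let Ω and Γ be finite nonempty types, let π be an observed distribution on Ω × Ω with π_X(x) > 0 for every x ∈ Ω, and let (μ, ν) be a pair compatible with π with interventional distribution ζ = φ(μ, ν). Define the honest distribution η(z, x) = π(x, z)/π_X(x) and the correlation distance δ(μ) = Σ_{x∈Ω, u∈Γ} |μ(x,u) − μ_X(x)·μ_U(u)|. Then Σ_{x,z∈Ω} |ζ(z,x) − η(z,x)| ≤ δ(μ) / (min_{x∈Ω} π_X(x)). -/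
open Finset

/-- A joint distribution on `Ω × Γ`. -/
def IsJoint {Ω Γ : Type*} [Fintype Ω] [Fintype Γ] (μ : Ω × Γ → ℝ) : Prop :=
  (∀ p, 0 ≤ μ p) ∧ ∑ p : Ω × Γ, μ p = 1

/-- Marginal on the first coordinate. -/
noncomputable def margX {Ω Γ : Type*} [Fintype Γ] (μ : Ω × Γ → ℝ) (x : Ω) : ℝ :=
  ∑ u : Γ, μ (x, u)

/-- Marginal on the second coordinate. -/
noncomputable def margU {Ω Γ : Type*} [Fintype Ω] (μ : Ω × Γ → ℝ) (u : Γ) : ℝ :=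
  ∑ x : Ω, μ (x, u)

/-- A conditional distribution of `Ω` given `Ω × Γ`, written `ν (z, x, u)`. -/
def IsCondXU {Ω Γ : Type*} [Fintype Ω] (ν : Ω × Ω × Γ → ℝ) : Prop :=
  (∀ p, 0 ≤ ν p) ∧ ∀ x : Ω, ∀ u : Γ, ∑ z : Ω, ν (z, x, u) = 1

/-- A conditional distribution of `Ω` given `Ω`, written `ζ (z, x)`. -/
def IsCondX {Ω : Type*} [Fintype Ω] (ζ : Ω × Ω → ℝ) : Prop :=
  (∀ p, 0 ≤ ζ p) ∧ ∀ x : Ω, ∑ z : Ω, ζ (z, x) = 1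

/-- The pair `(μ, ν)` is compatible with the observed distribution `π`. -/
def Compatible {Ω Γ : Type*} [Fintype Γ] (π : Ω × Ω → ℝ) (μ : Ω × Γ → ℝ)
    (ν : Ω × Ω × Γ → ℝ) : Prop :=
  ∀ x z : Ω, π (x, z) = ∑ u : Γ, μ (x, u) * ν (z, x, u)

/-- The interventional distribution `φ(μ, ν)`, as a function `(z, x) ↦ ζ(z, x)`. -/
noncomputable def intervention {Ω Γ : Type*} [Fintype Ω] [Fintype Γ]
    (μ : Ω × Γ → ℝ) (ν : Ω × Ω × Γ → ℝ) : Ω × Ω → ℝ :=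
  fun p => ∑ u : Γ, margU μ u * ν (p.1, p.2, u)

/-- `I_π`: the set of interventional distributions of pairs compatible with `π`. -/
def Ipi {Ω : Type*} (Γ : Type*) [Fintype Ω] [Fintype Γ]
    (π : Ω × Ω → ℝ) : Set (Ω × Ω → ℝ) :=
  {ζ | ∃ μ : Ω × Γ → ℝ, ∃ ν : Ω × Ω × Γ → ℝ,
    IsJoint μ ∧ IsCondXU ν ∧ Compatible π μ ν ∧ ζ = intervention μ ν}

/-- If `(μ, ν)` is compatible with `π`, the interventional distribution is within
`δ(μ) / min_x π_X(x)` of the honest (observed conditional) distribution in `ℓ¹`. -/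
theorem stmt_0 {Ω Γ : Type*} [Fintype Ω] [Fintype Γ] [Nonempty Ω] [Nonempty Γ]
    (π : Ω × Ω → ℝ) (hπ : IsJoint π) (hπX : ∀ x : Ω, 0 < margX π x)
    (μ : Ω × Γ → ℝ) (ν : Ω × Ω × Γ → ℝ)
    (hμ : IsJoint μ) (hν : IsCondXU ν) (hcomp : Compatible π μ ν) :
    ∑ x : Ω, ∑ z : Ω, |intervention μ ν (z, x) - π (x, z) / margX π x| ≤
      (∑ x : Ω, ∑ u : Γ, |μ (x, u) - margX μ x * margU μ u|) /
        Finset.univ.inf' Finset.univ_nonempty (margX π) := by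

  set m := Finset.univ.inf' Finset.univ_nonempty (margX π) with hm
  have hmpos : 0 < m := by
    rw [hm, Finset.lt_inf'_iff]
    intro x _
    exact hπX x
  have hmle : ∀ x : Ω, m ≤ margX π x := fun x =>
    Finset.inf'_le _ (Finset.mem_univ x)
  -- margX π = margX μ
  have hXeq : ∀ x : Ω, margX π x = margX μ x := by
    intro x
    unfold margX
    simp only [hcomp x]
    rw [Finset.sum_comm]
    apply Finset.sum_congr rfl
    intro u _
    rw [← Finset.mul_sum, hν.2 x u, mul_one]
  have key : ∀ x : Ω, ∑ z : Ω, |intervention μ ν (z, x) - π (x, z) / margX π x| ≤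
      (∑ u : Γ, |μ (x, u) - margX μ x * margU μ u|) / margX π x := by
    intro x
    have hpx := hπX x
    have step : ∀ z : Ω, |intervention μ ν (z, x) - π (x, z) / margX π x| ≤
        ∑ u : Γ, ν (z, x, u) * (|μ (x, u) - margX μ x * margU μ u| / margX π x) := by
      intro z
      have : intervention μ ν (z, x) - π (x, z) / margX π x =
          ∑ u : Γ, ν (z, x, u) * ((margX μ x * margU μ u - μ (x, u)) / margX π x) := by
        unfold intervention
        rw [hcomp x z, Finset.sum_div, ← Finset.sum_sub_distrib]
        apply Finset.sum_congr rfl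
        intro u _
        field_simp
        rw [hXeq x]
      rw [this]
      calc |∑ u : Γ, ν (z, x, u) * ((margX μ x * margU μ u - μ (x, u)) / margX π x)|
          ≤ ∑ u : Γ, |ν (z, x, u) * ((margX μ x * margU μ u - μ (x, u)) / margX π x)| :=
            Finset.abs_sum_le_sum_abs _ _
        _ = ∑ u : Γ, ν (z, x, u) * (|μ (x, u) - margX μ x * margU μ u| / margX π x) := by
            apply Finset.sum_congr rfl
            intro u _
            rw [abs_mul, abs_of_nonneg (hν.1 (z, x, u)), abs_div,
              abs_of_pos hpx, abs_sub_comm]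
    calc ∑ z : Ω, |intervention μ ν (z, x) - π (x, z) / margX π x|
        ≤ ∑ z : Ω, ∑ u : Γ, ν (z, x, u) * (|μ (x, u) - margX μ x * margU μ u| / margX π x) :=
          Finset.sum_le_sum fun z _ => step z
      _ = ∑ u : Γ, (∑ z : Ω, ν (z, x, u)) * (|μ (x, u) - margX μ x * margU μ u| / margX π x) := by
          rw [Finset.sum_comm]
          simp [Finset.sum_mul]
      _ = (∑ u : Γ, |μ (x, u) - margX μ x * margU μ u|) / margX π x := by
          rw [Finset.sum_div]
          apply Finset.sum_congr rfl
          intro u _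
          rw [hν.2 x u, one_mul]
  calc ∑ x : Ω, ∑ z : Ω, |intervention μ ν (z, x) - π (x, z) / margX π x|
      ≤ ∑ x : Ω, (∑ u : Γ, |μ (x, u) - margX μ x * margU μ u|) / margX π x :=
        Finset.sum_le_sum fun x _ => key x
    _ ≤ ∑ x : Ω, (∑ u : Γ, |μ (x, u) - margX μ x * margU μ u|) / m := by
        apply Finset.sum_le_sum
        intro x _
        apply div_le_div_of_nonneg_left _ hmpos (hmle x)
        exact Finset.sum_nonneg fun u _ => abs_nonneg _
    _ = (∑ x : Ω, ∑ u : Γ, |μ (x, u) - margX μ x * margU μ u|) / m := by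
        rw [Finset.sum_div]
end

section
/- Let Ω and Γ be finite nonempty types with |Γ| = k, let π be an observed distribution on Ω × Ω, and let ℓ : Ω → ℝ be nonnegative with nonempty support supp(ℓ) = {x ∈ Ω : ℓ(x) > 0}. Then there exists x ∈ supp(ℓ) such that for every ζ ∈ I_π, Σ_{x'∈Ω} ℓ(x') · ζ(x', x') ≥ (|supp(ℓ)|² / k) · ℓ(x) · π(x, x). -/
open Finset

lemma sqrt_sum_le_sum_sqrt {ι : Type*} (s : Finset ι) (c : ι → ℝ) (hc : ∀ i ∈ s, 0 ≤ c i) :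
    Real.sqrt (∑ i ∈ s, c i) ≤ ∑ i ∈ s, Real.sqrt (c i) := by
  rw [show ∑ i ∈ s, c i = ∑ i ∈ s, (Real.sqrt (c i)) ^ 2 by
    exact Finset.sum_congr rfl fun i hi => (Real.sq_sqrt (hc i hi)).symm]
  calc Real.sqrt (∑ i ∈ s, Real.sqrt (c i) ^ 2)
      ≤ Real.sqrt ((∑ i ∈ s, Real.sqrt (c i)) ^ 2) := by
        apply Real.sqrt_le_sqrt
        exact Finset.sum_sq_le_sq_sum_of_nonneg fun i _ => Real.sqrt_nonneg _
    _ = ∑ i ∈ s, Real.sqrt (c i) :=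
        Real.sqrt_sq (Finset.sum_nonneg fun i _ => Real.sqrt_nonneg _)

/-- Diagonal functional bound: for some `x` in the support of `ℓ`, every interventional
distribution `ζ ∈ I_π` satisfies `L(ζ) ≥ (|supp(ℓ)|²/k) ℓ(x) π(x,x)`. -/
theorem stmt_2 {Ω Γ : Type*} [Fintype Ω] [Fintype Γ] [Nonempty Ω] [Nonempty Γ]
    (π : Ω × Ω → ℝ) (hπ : IsJoint π)
    (ℓ : Ω → ℝ) (hℓ : ∀ x, 0 ≤ ℓ x) (hsupp : ∃ x, 0 < ℓ x) :
    ∃ x : Ω, 0 < ℓ x ∧ ∀ ζ ∈ Ipi Γ π,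
      ((Finset.univ.filter fun x' : Ω => 0 < ℓ x').card : ℝ) ^ 2 / (Fintype.card Γ : ℝ) *
          (ℓ x * π (x, x)) ≤
        ∑ x' : Ω, ℓ x' * ζ (x', x') := by
  classical
  obtain ⟨x₀, hx₀⟩ := hsupp
  set S := Finset.univ.filter fun x' : Ω => 0 < ℓ x' with hSdef
  have hSne : S.Nonempty := ⟨x₀, by simp [hSdef, hx₀]⟩
  obtain ⟨x, hxS, hxmin⟩ := S.exists_min_image (fun y => ℓ y * π (y, y)) hSne
  have hxpos : 0 < ℓ x := (Finset.mem_filter.mp hxS).2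
  refine ⟨x, hxpos, ?_⟩
  rintro ζ ⟨μ, ν, hμ, hν, hcomp, rfl⟩
  have hk : (0 : ℝ) < (Fintype.card Γ : ℝ) := by
    exact_mod_cast Fintype.card_pos
  set m := ℓ x * π (x, x) with hmdef
  have hm : 0 ≤ m := mul_nonneg (hℓ x) (hπ.1 _)
  have hμnn := hμ.1
  have hνnn := hν.1
  have hmargU : ∀ u, 0 ≤ margU μ u := fun u => Finset.sum_nonneg fun _ _ => hμnn _
  set A : Γ → ℝ := fun u => ∑ x' ∈ S, ℓ x' * ν (x', x', u) with hAdef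
  have hA : ∀ u, 0 ≤ A u :=
    fun u => Finset.sum_nonneg fun x' _ => mul_nonneg (hℓ _) (hνnn _)
  -- Step 1: per u, Cauchy–Schwarz
  have step1 : ∀ u, ∑ x' ∈ S, Real.sqrt (μ (x', u) * (ℓ x' * ν (x', x', u))) ≤
      Real.sqrt (margU μ u * A u) := by
    intro u
    have h1 : ∑ x' ∈ S, Real.sqrt (μ (x', u) * (ℓ x' * ν (x', x', u))) =
        ∑ x' ∈ S, Real.sqrt (μ (x', u)) * Real.sqrt (ℓ x' * ν (x', x', u)) :=
      Finset.sum_congr rfl fun x' _ => Real.sqrt_mul (hμnn _) _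
    rw [h1]
    have h2 := Real.sum_sqrt_mul_sqrt_le S (f := fun x' => μ (x', u))
      (g := fun x' => ℓ x' * ν (x', x', u)) (fun _ => hμnn _)
      (fun x' => mul_nonneg (hℓ _) (hνnn _))
    refine h2.trans ?_
    rw [← Real.sqrt_mul (Finset.sum_nonneg fun _ _ => hμnn _)]
    apply Real.sqrt_le_sqrt
    apply mul_le_mul_of_nonneg_right _ (hA u)
    exact Finset.sum_le_sum_of_subset_of_nonneg (Finset.subset_univ S)
      (fun i _ _ => hμnn _)
  -- Step 2: per x' ∈ S, sqrt of ℓπ ≤ sum over u of sqrts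
  have step2 : ∀ x' ∈ S, Real.sqrt (ℓ x' * π (x', x')) ≤
      ∑ u : Γ, Real.sqrt (μ (x', u) * (ℓ x' * ν (x', x', u))) := by
    intro x' _
    have h1 : ℓ x' * π (x', x') = ∑ u : Γ, μ (x', u) * (ℓ x' * ν (x', x', u)) := by
      rw [hcomp x' x', Finset.mul_sum]
      exact Finset.sum_congr rfl fun u _ => by ring
    rw [h1]
    exact sqrt_sum_le_sum_sqrt _ _ fun u _ =>
      mul_nonneg (hμnn _) (mul_nonneg (hℓ _) (hνnn _))
  -- Step 3: s * sqrt m ≤ sum over S of sqrt (ℓπ)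
  have step3 : (S.card : ℝ) * Real.sqrt m ≤
      ∑ x' ∈ S, Real.sqrt (ℓ x' * π (x', x')) := by
    have : ∀ x' ∈ S, Real.sqrt m ≤ Real.sqrt (ℓ x' * π (x', x')) :=
      fun x' hx' => Real.sqrt_le_sqrt (hxmin x' hx')
    calc (S.card : ℝ) * Real.sqrt m = ∑ _x' ∈ S, Real.sqrt m := by
          rw [Finset.sum_const, nsmul_eq_mul]
      _ ≤ _ := Finset.sum_le_sum this
  -- Combine: s √m ≤ Σ_u √(μ_U u * A u)
  have step4 : (S.card : ℝ) * Real.sqrt m ≤ ∑ u : Γ, Real.sqrt (margU μ u * A u) := by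
    refine step3.trans ?_
    calc ∑ x' ∈ S, Real.sqrt (ℓ x' * π (x', x'))
        ≤ ∑ x' ∈ S, ∑ u : Γ, Real.sqrt (μ (x', u) * (ℓ x' * ν (x', x', u))) :=
          Finset.sum_le_sum step2
      _ = ∑ u : Γ, ∑ x' ∈ S, Real.sqrt (μ (x', u) * (ℓ x' * ν (x', x', u))) :=
          Finset.sum_comm
      _ ≤ ∑ u : Γ, Real.sqrt (margU μ u * A u) := Finset.sum_le_sum fun u _ => step1 u
  -- Cauchy–Schwarz over u
  have step5 : (∑ u : Γ, Real.sqrt (margU μ u * A u)) ^ 2 ≤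
      (Fintype.card Γ : ℝ) * ∑ u : Γ, margU μ u * A u := by
    have := Finset.sum_mul_sq_le_sq_mul_sq Finset.univ
      (fun u : Γ => Real.sqrt (margU μ u * A u)) (fun _ => (1 : ℝ))
    simp only [mul_one, one_pow] at this
    calc (∑ u : Γ, Real.sqrt (margU μ u * A u)) ^ 2
        ≤ (∑ u : Γ, Real.sqrt (margU μ u * A u) ^ 2) * ∑ _u : Γ, (1 : ℝ) := this
      _ = (Fintype.card Γ : ℝ) * ∑ u : Γ, margU μ u * A u := by
          rw [Finset.sum_const, nsmul_eq_mul, mul_one,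
            Finset.card_univ, mul_comm]
          congr 1
          exact Finset.sum_congr rfl fun u _ =>
            Real.sq_sqrt (mul_nonneg (hmargU u) (hA u))
  -- identify Σ_u μ_U A with the diagonal functional
  have step6 : ∑ u : Γ, margU μ u * A u ≤
      ∑ x' : Ω, ℓ x' * intervention μ ν (x', x') := by
    have h1 : ∑ u : Γ, margU μ u * A u =
        ∑ x' ∈ S, ℓ x' * intervention μ ν (x', x') := by
      simp only [hAdef, Finset.mul_sum]
      rw [Finset.sum_comm]
      refine Finset.sum_congr rfl fun x' _ => ?_
      simp only [intervention, Finset.mul_sum]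
      exact Finset.sum_congr rfl fun u _ => by ring
    rw [h1]
    refine Finset.sum_le_sum_of_subset_of_nonneg (Finset.subset_univ S) fun i _ _ => ?_
    refine mul_nonneg (hℓ _) (Finset.sum_nonneg fun u _ => mul_nonneg (hmargU u) (hνnn _))
  -- finish
  rw [div_mul_eq_mul_div, div_le_iff₀ hk]
  have hlhs : (S.card : ℝ) ^ 2 * m = ((S.card : ℝ) * Real.sqrt m) ^ 2 := by
    rw [mul_pow, Real.sq_sqrt hm]
  rw [hlhs]
  calc ((S.card : ℝ) * Real.sqrt m) ^ 2
      ≤ (∑ u : Γ, Real.sqrt (margU μ u * A u)) ^ 2 := by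
        apply pow_le_pow_left₀ (by positivity) step4
    _ ≤ (Fintype.card Γ : ℝ) * ∑ u : Γ, margU μ u * A u := step5
    _ ≤ (Fintype.card Γ : ℝ) * ∑ x' : Ω, ℓ x' * intervention μ ν (x', x') := by
        exact mul_le_mul_of_nonneg_left step6 hk.le
    _ = (∑ x' : Ω, ℓ x' * intervention μ ν (x', x')) * (Fintype.card Γ : ℝ) := mul_comm _ _
end

section
/- Let Ω and Γ be finite nonempty types with |Ω| = n and |Γ| = k, let π be an observed distribution on Ω × Ω, and let ε ≥ 0 be such that for every x ∈ Ω: π_X(x) > 0, π(x,x)/π_X(x) ≥ 1 − ε, and ε < 1 − k/(n² · π_X(x)). Then no ζ ∈ I_π is independent of X; that is, for every ζ ∈ I_π there exist x, x', z ∈ Ω with ζ(z, x) ≠ ζ(z, x'). -/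
open Finset

/-- If `X` and `Z` are `ε`-perfectly correlated with `ε < 1 - k/(n² π_X(x))` for all `x`,
then no interventional distribution compatible with `π` is independent of `X`. -/
theorem stmt_3 {Ω Γ : Type*} [Fintype Ω] [Fintype Γ] [Nonempty Ω] [Nonempty Γ]
    (π : Ω × Ω → ℝ) (hπ : IsJoint π) (ε : ℝ) (hε : 0 ≤ ε)
    (hπX : ∀ x : Ω, 0 < margX π x)
    (hcorr : ∀ x : Ω, 1 - ε ≤ π (x, x) / margX π x)
    (hεsmall : ∀ x : Ω,
      ε < 1 - (Fintype.card Γ : ℝ) / ((Fintype.card Ω : ℝ) ^ 2 * margX π x)) :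
    ∀ ζ ∈ Ipi Γ π, ∃ x x' z : Ω, ζ (z, x) ≠ ζ (z, x') := by
  rintro ζ ⟨μ, ν, hμ, hν, hcomp, rfl⟩
  by_contra hcon
  push_neg at hcon
  obtain ⟨x₀⟩ := (inferInstance : Nonempty Ω)
  set nn : ℝ := (Fintype.card Ω : ℝ) with hnn
  set kk : ℝ := (Fintype.card Γ : ℝ) with hkk
  have hn0 : 0 < nn := by
    have := Fintype.card_pos (α := Ω); positivity
  have hk0 : 0 < kk := by
    have := Fintype.card_pos (α := Γ); positivity
  -- marginal of π equals marginal of μ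
  have hmarg : ∀ x, margX π x = ∑ u : Γ, μ (x, u) := by
    intro x
    unfold margX
    calc ∑ z : Ω, π (x, z) = ∑ z : Ω, ∑ u : Γ, μ (x, u) * ν (z, x, u) := by
          simp [hcomp x]
      _ = ∑ u : Γ, μ (x, u) * ∑ z : Ω, ν (z, x, u) := by
          rw [Finset.sum_comm]; simp [Finset.mul_sum]
      _ = ∑ u : Γ, μ (x, u) := by simp [hν.2]
  -- nonneg & total mass facts
  have hμ0 := hμ.1
  have hν0 := hν.1
  have hmargU0 : ∀ u, 0 ≤ margU μ u := fun u =>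
    Finset.sum_nonneg fun x _ => hμ0 (x, u)
  have hμle : ∀ x u, μ (x, u) ≤ margU μ u := by
    intro x u
    exact Finset.single_le_sum (fun y _ => hμ0 (y, u)) (Finset.mem_univ x)
  have hsumU : ∑ u : Γ, margU μ u = 1 := by
    unfold margU
    rw [Finset.sum_comm]
    rw [← hμ.2, ← Fintype.sum_prod_type]
  -- ζ diag facts
  have hζnn : ∀ p, 0 ≤ intervention μ ν p := by
    intro p
    exact Finset.sum_nonneg fun u _ => mul_nonneg (hmargU0 u) (hν0 _)
  have hζsum : ∑ x : Ω, intervention μ ν (x, x) = 1 := by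
    have h1 : ∀ x : Ω, intervention μ ν (x, x) = intervention μ ν (x, x₀) :=
      fun x => hcon x x₀ x
    calc ∑ x : Ω, intervention μ ν (x, x) = ∑ x : Ω, intervention μ ν (x, x₀) := by
          simp [h1]
      _ = ∑ u : Γ, margU μ u * ∑ x : Ω, ν (x, x₀, u) := by
          unfold intervention
          rw [Finset.sum_comm]; simp [Finset.mul_sum]
      _ = 1 := by simp [hν.2, hsumU]
  -- diagonal of π is large
  have hdiag : ∀ x, kk / nn ^ 2 < π (x, x) := by
    intro x
    have h1 := hcorr x
    have h2 := hεsmall x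
    have hx := hπX x
    have h3 : kk / (nn ^ 2 * margX π x) < π (x, x) / margX π x := by
      calc kk / (nn ^ 2 * margX π x) < 1 - ε := by linarith
        _ ≤ π (x, x) / margX π x := h1
    have h4 : kk / (nn ^ 2 * margX π x) = (kk / nn ^ 2) / margX π x := by
      field_simp
    rw [h4] at h3
    exact (div_lt_div_iff_of_pos_right hx).mp h3
  -- the weights c x
  set c : Ω → ℝ := fun x => ∑ u : Γ, μ (x, u) / margU μ u with hc
  have hc0 : ∀ x, 0 < c x := by
    intro x
    have hx : 0 < ∑ u : Γ, μ (x, u) := by rw [← hmarg]; exact hπX x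
    obtain ⟨u, -, hu⟩ : ∃ u ∈ Finset.univ, 0 < μ (x, u) := by
      by_contra hcon2
      push_neg at hcon2
      have : ∑ u : Γ, μ (x, u) ≤ 0 := Finset.sum_nonpos fun u hu => hcon2 u hu
      linarith
    have hmu : 0 < margU μ u := lt_of_lt_of_le hu (hμle x u)
    have : 0 < μ (x, u) / margU μ u := div_pos hu hmu
    exact lt_of_lt_of_le this (Finset.single_le_sum
      (fun v _ => div_nonneg (hμ0 (x, v)) (hmargU0 v)) (Finset.mem_univ u))
  have hcsum : ∑ x : Ω, c x ≤ kk := by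
    have : ∑ x : Ω, c x = ∑ u : Γ, (∑ x : Ω, μ (x, u)) / margU μ u := by
      rw [hc, Finset.sum_comm]
      simp [Finset.sum_div]
    rw [this, hkk]
    calc ∑ u : Γ, (∑ x : Ω, μ (x, u)) / margU μ u ≤ ∑ u : Γ, 1 := by
          apply Finset.sum_le_sum
          intro u _
          rcases eq_or_lt_of_le (hmargU0 u) with h | h
          · have h0 : (∑ x : Ω, μ (x, u)) = 0 := h.symm
            rw [h0]; norm_num
          · rw [div_le_one h]
            exact le_of_eq rfl
        _ = (Fintype.card Γ : ℝ) := by simp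
  -- key bound: π(x,x) ≤ c x * ζ(x,x)
  have hkey : ∀ x, π (x, x) ≤ c x * intervention μ ν (x, x) := by
    intro x
    rw [hcomp x x, hc]
    rw [Finset.sum_mul]
    apply Finset.sum_le_sum
    intro u _
    rcases eq_or_lt_of_le (hmargU0 u) with h | h
    · have : μ (x, u) = 0 := le_antisymm (h ▸ hμle x u) (hμ0 _)
      simp [this]
    · have h1 : margU μ u * ν (x, x, u) ≤ intervention μ ν (x, x) := by
        show margU μ u * ν (x, x, u) ≤ ∑ v : Γ, margU μ v * ν ((x, x).1, (x, x).2, v)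
        exact Finset.single_le_sum
          (f := fun v => margU μ v * ν (x, x, v))
          (fun v _ => mul_nonneg (hmargU0 v) (hν0 _)) (Finset.mem_univ u)
      have h2 : μ (x, u) / margU μ u * (margU μ u * ν (x, x, u))
          ≤ μ (x, u) / margU μ u * intervention μ ν (x, x) :=
        mul_le_mul_of_nonneg_left h1 (div_nonneg (hμ0 _) (hmargU0 u))
      have hne : margU μ u ≠ 0 := h.ne'
      calc μ (x, u) * ν (x, x, u)
          = μ (x, u) / margU μ u * (margU μ u * ν (x, x, u)) := by
            field_simp
        _ ≤ μ (x, u) / margU μ u * intervention μ ν (x, x) := h2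
  -- AM-HM via Cauchy-Schwarz
  have hAMHM : nn ^ 2 ≤ (∑ x : Ω, c x) * ∑ x : Ω, 1 / c x := by
    have := Finset.sum_mul_sq_le_sq_mul_sq Finset.univ
      (fun x => Real.sqrt (c x)) (fun x => 1 / Real.sqrt (c x))
    have heq : ∀ x : Ω, Real.sqrt (c x) * (1 / Real.sqrt (c x)) = 1 := by
      intro x
      have : Real.sqrt (c x) ≠ 0 := ne_of_gt (Real.sqrt_pos.mpr (hc0 x))
      field_simp
    have h1 : ∀ x : Ω, Real.sqrt (c x) ^ 2 = c x := fun x =>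
      Real.sq_sqrt (hc0 x).le
    have h2 : ∀ x : Ω, (1 / Real.sqrt (c x)) ^ 2 = 1 / c x := by
      intro x
      rw [div_pow, one_pow, h1]
    simp only [heq, h1, h2] at this
    simpa [hnn] using this
  -- final contradiction
  set S : ℝ := ∑ x : Ω, c x with hS
  have hS0 : 0 < S := Finset.sum_pos (fun x _ => hc0 x) Finset.univ_nonempty
  have h5 : nn ^ 2 / S ≤ ∑ x : Ω, 1 / c x := by
    rw [div_le_iff₀ hS0]
    calc nn ^ 2 ≤ S * ∑ x : Ω, 1 / c x := hAMHM
      _ = (∑ x : Ω, 1 / c x) * S := by ring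
  have h6 : (1 : ℝ) ≤ kk / nn ^ 2 * (nn ^ 2 / S) := by
    have : kk / nn ^ 2 * (nn ^ 2 / S) = kk / S := by
      field_simp
    rw [this, le_div_iff₀ hS0, one_mul]
    exact hcsum
  have h7 : kk / nn ^ 2 * (nn ^ 2 / S) ≤ kk / nn ^ 2 * ∑ x : Ω, 1 / c x :=
    mul_le_mul_of_nonneg_left h5 (by positivity)
  have h8 : kk / nn ^ 2 * ∑ x : Ω, 1 / c x = ∑ x : Ω, (kk / nn ^ 2) / c x := by
    rw [Finset.mul_sum]
    exact Finset.sum_congr rfl fun x _ => by rw [mul_one_div]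
  have hs1 : ∑ x : Ω, (kk / nn ^ 2) / c x < ∑ x : Ω, intervention μ ν (x, x) := by
    apply Finset.sum_lt_sum_of_nonempty Finset.univ_nonempty
    intro x _
    have hx1 : (kk / nn ^ 2) / c x < π (x, x) / c x := by
      apply div_lt_div_of_pos_right (hdiag x) (hc0 x)
    have hx2 : π (x, x) / c x ≤ intervention μ ν (x, x) := by
      rw [div_le_iff₀ (hc0 x)]
      calc π (x, x) ≤ c x * intervention μ ν (x, x) := hkey x
        _ = intervention μ ν (x, x) * c x := by ring
    linarith
  linarith [hζsum, h6, h7, h8.symm.le, hs1]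
end

section
/- Let Ω and Γ be finite nonempty types and let π be an observed distribution on Ω × Ω that is a perfect channel, i.e., π(x,z) = 0 whenever x ≠ z. Then I_π = ⋃_{S ⊆ Ω × Γ} Q_S, where Q_S = { φ(μ,ν) : μ ∈ Σ_S, ν ∈ N_S }. -/
open Finset

/-- `Σ_S`: joint distributions with marginal `π_X` supported inside `S`. -/
def SigmaS {Ω Γ : Type*} [Fintype Ω] [Fintype Γ] (π : Ω × Ω → ℝ)
    (S : Set (Ω × Γ)) : Set (Ω × Γ → ℝ) :=
  {μ | IsJoint μ ∧ (∀ x, margX μ x = margX π x) ∧ ∀ p, 0 < μ p → p ∈ S}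

/-- `N_S`: conditional distributions which are deterministic (`Z = X`) on `S`. -/
def NS {Ω Γ : Type*} [Fintype Ω] [DecidableEq Ω] (S : Set (Ω × Γ)) :
    Set (Ω × Ω × Γ → ℝ) :=
  {ν | IsCondXU ν ∧ ∀ x u, (x, u) ∈ S → ∀ z, ν (z, x, u) = if z = x then 1 else 0}

/-- `Q_S = φ(Σ_S, N_S)`. -/
def QS {Ω Γ : Type*} [Fintype Ω] [Fintype Γ] [DecidableEq Ω] (π : Ω × Ω → ℝ)
    (S : Set (Ω × Γ)) : Set (Ω × Ω → ℝ) :=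
  {ζ | ∃ μ ∈ SigmaS π S, ∃ ν ∈ NS S, ζ = intervention μ ν}

/-- For a perfect channel `π`, `I_π` is the union over `S ⊆ Ω × Γ` of the sets `Q_S`. -/
theorem stmt_4 {Ω Γ : Type*} [Fintype Ω] [Fintype Γ] [DecidableEq Ω]
    [Nonempty Ω] [Nonempty Γ]
    (π : Ω × Ω → ℝ) (hπ : IsJoint π) (hperf : ∀ x z : Ω, x ≠ z → π (x, z) = 0) :
    Ipi Γ π = ⋃ S : Set (Ω × Γ), QS π S := by
  ext ζ
  simp only [Set.mem_iUnion]
  constructor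
  · rintro ⟨μ, ν, hμ, hν, hc, rfl⟩
    refine ⟨{p | 0 < μ p}, μ, ⟨hμ, ?_, fun p h => h⟩, ν, ⟨hν, ?_⟩, rfl⟩
    · intro x
      have key : margX μ x = ∑ z : Ω, π (x, z) := by
        rw [margX]
        calc ∑ u : Γ, μ (x, u) = ∑ u : Γ, μ (x, u) * ∑ z : Ω, ν (z, x, u) := by
              simp [hν.2]
          _ = ∑ u : Γ, ∑ z : Ω, μ (x, u) * ν (z, x, u) := by
              simp [Finset.mul_sum]
          _ = ∑ z : Ω, ∑ u : Γ, μ (x, u) * ν (z, x, u) := Finset.sum_comm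
          _ = ∑ z : Ω, π (x, z) := Finset.sum_congr rfl fun z _ => (hc x z).symm
      rw [key]; rfl
    · intro x u hxu z
      have hzero : ∀ z' : Ω, z' ≠ x → ν (z', x, u) = 0 := by
        intro z' hz'
        have h0 : (0:ℝ) = ∑ u' : Γ, μ (x, u') * ν (z', x, u') := by
          rw [← hc x z', hperf x z' (Ne.symm hz')]
        have hall := (Finset.sum_eq_zero_iff_of_nonneg
          (fun u' _ => mul_nonneg (hμ.1 _) (hν.1 _))).1 h0.symm u (Finset.mem_univ u)
        rcases mul_eq_zero.1 hall with h | h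
        · exact absurd h (ne_of_gt hxu)
        · exact h
      by_cases h : z = x
      · subst h
        have hsum := hν.2 z u
        have : ∑ z' : Ω, ν (z', z, u) = ν (z, z, u) :=
          Finset.sum_eq_single z (fun b _ hb => hzero b hb) (by simp)
        rw [if_pos rfl, ← this]; exact hsum
      · simp [h, hzero z h]
  · rintro ⟨S, μ, ⟨hμ, hmarg, hsupp⟩, ν, ⟨hν, hdet⟩, rfl⟩
    refine ⟨μ, ν, hμ, hν, ?_, rfl⟩
    intro x z
    have hterm : ∀ u : Γ, μ (x, u) * ν (z, x, u) = μ (x, u) * (if z = x then 1 else 0) := by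
      intro u
      by_cases h : 0 < μ (x, u)
      · rw [hdet x u (hsupp _ h) z]
      · have h0 : μ (x, u) = 0 := le_antisymm (not_lt.1 h) (hμ.1 _)
        simp [h0]
    rw [show (∑ u : Γ, μ (x, u) * ν (z, x, u))
        = ∑ u : Γ, μ (x, u) * (if z = x then 1 else 0) from
      Finset.sum_congr rfl fun u _ => hterm u]
    by_cases h : z = x
    · subst h
      have h1 : π (z, z) = ∑ z' : Ω, π (z, z') :=
        (Finset.sum_eq_single z (fun b _ hb => hperf z b (Ne.symm hb)) (by simp)).symm
      have h2 : margX μ z = margX π z := hmarg z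
      simp only [if_pos rfl, mul_one]
      rw [h1, show (∑ z' : Ω, π (z, z')) = margX π z from rfl, ← h2]
      simp [margX]
    · simp only [if_neg h, mul_zero, Finset.sum_const_zero]
      exact hperf x z (fun e => h e.symm)
end

section
/- Let Ω and Γ be finite nonempty types and let π be an observed distribution on Ω × Ω that is a perfect channel, i.e., π(x,z) = 0 whenever x ≠ z. Then for every S ⊆ Ω × Γ, the set Q_S = { φ(μ,ν) : μ ∈ Σ_S, ν ∈ N_S } is a convex polytope: there exists a finite set F of conditional distributions of Ω given Ω such that Q_S is the convex hull of F. -/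
open Finset

/-
Write `μ ∈ Σ_S` as `μ(x, u) = π_X(x) r(u | x)` and `ν ∈ N_S` as a kernel `k(z | x, u)`. The
constraints defining `Σ_S` and `N_S` only restrict the supports of the rows of `r` and `k`, so
each of the two sets of kernels is a product of faces of simplices, i.e. the convex hull of
finitely many deterministic kernels. As `φ` is bilinear in `(r, k)`, `Q_S` lies in the convex
hull of the finitely many images of pairs of deterministic kernels, and these lie in `Q_S`.
Conversely `Q_S` is convex, although `φ` is not linear: to mix `φ(μ₁, ν₁)` and `φ(μ₂, ν₂)` with
weights `a, b`, take `μ = a μ₁ + b μ₂` and let `ν(·, ·, u)` mix `ν₁(·, ·, u)` and `ν₂(·, ·, u)`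
in the proportion `a μ₁_U(u) : b μ₂_U(u)`.
-/

open Set
open scoped Pointwise

theorem LinearMap.image2_convexHull_subset {𝕜 E F G : Type*} [CommSemiring 𝕜] [PartialOrder 𝕜]
    [IsOrderedRing 𝕜] [AddCommMonoid E] [AddCommMonoid F] [AddCommMonoid G] [Module 𝕜 E]
    [Module 𝕜 F] [Module 𝕜 G] (f : E →ₗ[𝕜] F →ₗ[𝕜] G) (s : Set E) (t : Set F) :
    image2 (fun x y => f x y) (convexHull 𝕜 s) (convexHull 𝕜 t) ⊆
      convexHull 𝕜 (image2 (fun x y => f x y) s t) := by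
  rintro _ ⟨x, hx, y, hy, rfl⟩
  have hs : ∀ x' ∈ s, f x' y ∈ convexHull 𝕜 (image2 (fun x y => f x y) s t) := by
    intro x' hx'
    have : f x' y ∈ f x' '' convexHull 𝕜 t := mem_image_of_mem _ hy
    rw [LinearMap.image_convexHull] at this
    refine convexHull_mono ?_ this
    rintro _ ⟨y', hy', rfl⟩
    exact mem_image2_of_mem hx' hy'
  have : f x y ∈ f.flip y '' convexHull 𝕜 s := mem_image_of_mem _ hx
  rw [LinearMap.image_convexHull] at this
  exact convexHull_min (image_subset_iff.2 hs) (convex_convexHull 𝕜 _) this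

section Kernels

variable {ι κ : Type*} [Fintype κ] [DecidableEq κ]

theorem mem_convexHull_image_single_iff {A : Set κ} {w : κ → ℝ} :
    w ∈ convexHull ℝ ((fun k => Pi.single k 1) '' A) ↔
      w ∈ stdSimplex ℝ κ ∧ ∀ k ∉ A, w k = 0 := by
  constructor
  · refine fun hw => (convexHull_min ?_ ((convex_stdSimplex ℝ κ).inter ?_) hw :
      w ∈ stdSimplex ℝ κ ∩ {w | ∀ k ∉ A, w k = 0})
    · rintro _ ⟨k, hk, rfl⟩
      exact ⟨single_mem_stdSimplex ℝ k,
        fun j hj => Pi.single_eq_of_ne (ne_of_mem_of_not_mem hk hj).symm 1⟩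
    · intro w₁ h₁ w₂ h₂ a b _ _ _ k hk
      simp [h₁ k hk, h₂ k hk]
  · rintro ⟨⟨hw0, hw1⟩, hwA⟩
    have hsupp : ∀ k, w k ≠ 0 → k ∈ A := fun k hk => by_contra fun h => hk (hwA k h)
    have h := (convex_convexHull ℝ ((fun k => Pi.single k (1 : ℝ)) '' A)).sum_mem
      (t := univ.filter fun k => w k ≠ 0) (z := fun k => Pi.single k 1) (fun k _ => hw0 k)
      (by rwa [Finset.sum_filter_ne_zero])
      (fun k hk => subset_convexHull ℝ _ ⟨k, hsupp k (Finset.mem_filter.1 hk).2, rfl⟩)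
    rwa [Finset.sum_filter_of_ne fun k _ hk => left_ne_zero_of_smul hk, ← pi_eq_sum_univ'] at h

def detKernels (A : ι → Set κ) : Set (ι → κ → ℝ) :=
  univ.pi fun i => (fun k => Pi.single k 1) '' A i

theorem finite_detKernels [Finite ι] (A : ι → Set κ) : (detKernels A).Finite :=
  Set.Finite.pi fun i => (toFinite (A i)).image _

theorem mem_convexHull_detKernels_iff [Finite ι] {A : ι → Set κ} {q : ι → κ → ℝ} :
    q ∈ convexHull ℝ (detKernels A) ↔ ∀ i, q i ∈ stdSimplex ℝ κ ∧ ∀ k ∉ A i, q i k = 0 := by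
  simp only [detKernels, convexHull_pi, mem_univ_pi, mem_convexHull_image_single_iff]

end Kernels

def jointOf {Ω Γ : Type*} (p : Ω → ℝ) (r : Ω → Γ → ℝ) : Ω × Γ → ℝ := fun q => p q.1 * r q.1 q.2

theorem exists_eq_jointOf_margX {Ω Γ : Type*} [Fintype Γ] [Nonempty Γ] {μ : Ω × Γ → ℝ}
    (hμ : ∀ q, 0 ≤ μ q) :
    ∃ r : Ω → Γ → ℝ, (∀ x, r x ∈ stdSimplex ℝ Γ) ∧ μ = jointOf (margX μ) r := by
  classical
  obtain ⟨u₀⟩ := ‹Nonempty Γ›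
  refine ⟨fun x => if margX μ x = 0 then Pi.single u₀ 1 else fun u => μ (x, u) / margX μ x,
    fun x => ?_, funext fun ⟨x, u⟩ => ?_⟩
  · dsimp only
    split_ifs with hx
    · exact single_mem_stdSimplex ℝ u₀
    · refine ⟨fun u => div_nonneg (hμ _) (Finset.sum_nonneg fun _ _ => hμ _), ?_⟩
      rw [← Finset.sum_div]
      exact div_self hx
  · simp only [jointOf]
    split_ifs with hx
    · rw [hx, zero_mul]
      exact (Finset.sum_eq_zero_iff_of_nonneg fun _ _ => hμ _).1 hx u (Finset.mem_univ u)
    · field_simp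

section Distributions

variable {Ω Γ : Type*} [Fintype Ω] [Fintype Γ]

theorem IsJoint.margX_nonneg {μ : Ω × Γ → ℝ} (hμ : IsJoint μ) (x : Ω) : 0 ≤ margX μ x :=
  Finset.sum_nonneg fun _ _ => hμ.1 _

theorem IsJoint.margU_nonneg {μ : Ω × Γ → ℝ} (hμ : IsJoint μ) (u : Γ) : 0 ≤ margU μ u :=
  Finset.sum_nonneg fun _ _ => hμ.1 _

theorem IsJoint.sum_margX {μ : Ω × Γ → ℝ} (hμ : IsJoint μ) : ∑ x, margX μ x = 1 := by
  rw [← hμ.2, Fintype.sum_prod_type]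
  rfl

theorem IsJoint.sum_margU {μ : Ω × Γ → ℝ} (hμ : IsJoint μ) : ∑ u, margU μ u = 1 := by
  rw [← hμ.2, Fintype.sum_prod_type, Finset.sum_comm]
  rfl

theorem intervention_isCondX {μ : Ω × Γ → ℝ} {ν : Ω × Ω × Γ → ℝ} (hμ : IsJoint μ)
    (hν : IsCondXU ν) : IsCondX (intervention μ ν) := by
  refine ⟨fun _ => Finset.sum_nonneg fun u _ => mul_nonneg (hμ.margU_nonneg u) (hν.1 _),
    fun x => ?_⟩
  simp only [intervention]
  rw [Finset.sum_comm]
  simp only [← Finset.mul_sum, hν.2 x, mul_one, hμ.sum_margU]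

def latentSupport (π : Ω × Ω → ℝ) (S : Set (Ω × Γ)) (x : Ω) : Set Γ :=
  {u | margX π x ≠ 0 → (x, u) ∈ S}

def outcomeSupport (S : Set (Ω × Γ)) (q : Ω × Γ) : Set Ω := {z | q ∈ S → z = q.1}

theorem mem_SigmaS_iff [Nonempty Γ] [DecidableEq Γ] {π : Ω × Ω → ℝ} (hπ : IsJoint π)
    {S : Set (Ω × Γ)} {μ : Ω × Γ → ℝ} :
    μ ∈ SigmaS π S ↔
      ∃ r ∈ convexHull ℝ (detKernels (latentSupport π S)), μ = jointOf (margX π) r := by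
  constructor
  · rintro ⟨⟨hμ0, -⟩, hmarg, hS⟩
    obtain ⟨r, hr, hμr⟩ := exists_eq_jointOf_margX hμ0
    rw [funext hmarg] at hμr
    refine ⟨r, mem_convexHull_detKernels_iff.2 fun x => ⟨hr x, fun u hu => ?_⟩, hμr⟩
    simp only [latentSupport, mem_ofPred_eq, Classical.not_imp] at hu
    have hμxu : μ (x, u) = 0 := (hμ0 _).eq_or_lt.elim Eq.symm fun h => absurd (hS _ h) hu.2
    rw [hμr] at hμxu
    exact (mul_eq_zero.1 hμxu).resolve_left hu.1
  · rintro ⟨r, hr, rfl⟩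
    rw [mem_convexHull_detKernels_iff] at hr
    have hrow : ∀ x, ∑ u, jointOf (margX π) r (x, u) = margX π x := fun x => by
      simp only [jointOf, ← Finset.mul_sum, (hr x).1.2, mul_one]
    refine ⟨⟨fun q => mul_nonneg (hπ.margX_nonneg _) ((hr q.1).1.1 _), ?_⟩, hrow,
      fun ⟨x, u⟩ hpos => ?_⟩
    · rw [Fintype.sum_prod_type]
      simp only [hrow, hπ.sum_margX]
    · by_contra hS
      simp only [jointOf] at hpos
      rw [(hr x).2 u fun h => hS (h (left_ne_zero_of_mul hpos.ne')), mul_zero] at hpos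
      exact lt_irrefl 0 hpos

theorem mem_NS_iff [DecidableEq Ω] {S : Set (Ω × Γ)} {ν : Ω × Ω × Γ → ℝ} :
    ν ∈ NS S ↔ (fun q z => ν (z, q.1, q.2)) ∈ convexHull ℝ (detKernels (outcomeSupport S)) := by
  rw [mem_convexHull_detKernels_iff]
  constructor
  · rintro ⟨⟨hν0, hν1⟩, hS⟩
    refine fun q => ⟨⟨fun z => hν0 _, hν1 q.1 q.2⟩, fun z hz => ?_⟩
    simp only [outcomeSupport, mem_ofPred_eq, Classical.not_imp] at hz
    simp [hS q.1 q.2 hz.1 z, hz.2]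
  · intro h
    refine ⟨⟨fun t => (h (t.2.1, t.2.2)).1.1 t.1, fun x u => (h (x, u)).1.2⟩,
      fun x u hxu z => ?_⟩
    have hoff : ∀ z ≠ x, ν (z, x, u) = 0 := fun z hz => (h (x, u)).2 z fun h' => hz (h' hxu)
    split_ifs with hz
    · subst hz
      rw [← (h (z, u)).1.2, Finset.sum_eq_single z (fun b _ hb => hoff b hb) (by simp)]
    · exact hoff z hz

theorem convex_SigmaS (π : Ω × Ω → ℝ) (S : Set (Ω × Γ)) : Convex ℝ (SigmaS π S) := by
  rintro μ₁ ⟨⟨h0₁, h1₁⟩, hm₁, hS₁⟩ μ₂ ⟨⟨h0₂, h1₂⟩, hm₂, hS₂⟩ a b ha hb hab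
  refine ⟨⟨fun q => add_nonneg (mul_nonneg ha (h0₁ q)) (mul_nonneg hb (h0₂ q)), ?_⟩,
    fun x => ?_, fun q hq => ?_⟩
  · simp [Finset.sum_add_distrib, ← Finset.mul_sum, h1₁, h1₂, hab]
  · simp only [margX] at hm₁ hm₂ ⊢
    simp [Finset.sum_add_distrib, ← Finset.mul_sum, hm₁, hm₂, ← add_mul, hab]
  · by_contra hqS
    have h₁ := le_of_not_gt (mt (hS₁ q) hqS)
    have h₂ := le_of_not_gt (mt (hS₂ q) hqS)
    have : a * μ₁ q + b * μ₂ q ≤ 0 :=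
      add_nonpos (mul_nonpos_of_nonneg_of_nonpos ha h₁) (mul_nonpos_of_nonneg_of_nonpos hb h₂)
    exact this.not_gt hq

theorem convex_QS [DecidableEq Ω] (π : Ω × Ω → ℝ) (S : Set (Ω × Γ)) : Convex ℝ (QS π S) := by
  rintro _ ⟨μ₁, hμ₁, ν₁, hν₁, rfl⟩ _ ⟨μ₂, hμ₂, ν₂, hν₂, rfl⟩ a b ha hb hab
  rw [mem_NS_iff, detKernels, convexHull_pi] at hν₁ hν₂
  have hrow : ∀ q : Ω × Γ,
      ∃ w ∈ convexHull ℝ ((fun z => Pi.single z (1 : ℝ)) '' outcomeSupport S q),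
        (a * margU μ₁ q.2) • (fun z => ν₁ (z, q.1, q.2)) +
          (b * margU μ₂ q.2) • (fun z => ν₂ (z, q.1, q.2)) =
        (a * margU μ₁ q.2 + b * margU μ₂ q.2) • w := by
    intro q
    obtain ⟨w, hw, hsum⟩ : _ ∈ (a * margU μ₁ q.2 + b * margU μ₂ q.2) •
        convexHull ℝ ((fun z => Pi.single z (1 : ℝ)) '' outcomeSupport S q) := by
      rw [(convex_convexHull ℝ _).add_smul (mul_nonneg ha (hμ₁.1.margU_nonneg _))
        (mul_nonneg hb (hμ₂.1.margU_nonneg _))]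
      exact add_mem_add (smul_mem_smul_set (hν₁ q (mem_univ _)))
        (smul_mem_smul_set (hν₂ q (mem_univ _)))
    exact ⟨w, hw, hsum.symm⟩
  choose k hk hkν using hrow
  refine ⟨a • μ₁ + b • μ₂, convex_SigmaS π S hμ₁ hμ₂ ha hb hab,
    fun t => k (t.2.1, t.2.2) t.1, ?_, ?_⟩
  · rw [mem_NS_iff, detKernels, convexHull_pi]
    exact fun q _ => hk q
  · funext ⟨z, x⟩
    have hmix := fun u => congrFun (hkν (x, u)) z
    simp only [Pi.add_apply, Pi.smul_apply, smul_eq_mul] at hmix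
    calc (a • intervention μ₁ ν₁ + b • intervention μ₂ ν₂) (z, x)
        = ∑ u, (a * margU μ₁ u * ν₁ (z, x, u) + b * margU μ₂ u * ν₂ (z, x, u)) := by
          simp [intervention, Finset.mul_sum, Finset.sum_add_distrib, mul_assoc]
      _ = ∑ u, (a * margU μ₁ u + b * margU μ₂ u) * k (x, u) z :=
          Finset.sum_congr rfl fun u _ => hmix u
      _ = intervention (a • μ₁ + b • μ₂) (fun t => k (t.2.1, t.2.2) t.1) (z, x) := by
          simp [intervention, margU, Finset.sum_add_distrib, Finset.mul_sum]

noncomputable def kernelIntervention (p : Ω → ℝ) :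
    (Ω → Γ → ℝ) →ₗ[ℝ] (Ω × Γ → Ω → ℝ) →ₗ[ℝ] (Ω × Ω → ℝ) :=
  LinearMap.mk₂ ℝ (fun r k => intervention (jointOf p r) fun t => k (t.2.1, t.2.2) t.1)
    (fun _ _ _ => by
      funext; simp [intervention, margU, jointOf, mul_add, add_mul, Finset.sum_add_distrib])
    (fun _ _ _ => by
      funext
      simp [intervention, margU, jointOf, Finset.mul_sum, Finset.sum_mul, mul_assoc, mul_left_comm])
    (fun _ _ _ => by
      funext; simp [intervention, mul_add, Finset.sum_add_distrib])
    (fun _ _ _ => by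
      funext; simp [intervention, Finset.mul_sum, mul_left_comm])

theorem QS_eq_image2 [DecidableEq Ω] [DecidableEq Γ] [Nonempty Γ] {π : Ω × Ω → ℝ}
    (hπ : IsJoint π) (S : Set (Ω × Γ)) :
    QS π S = image2 (fun r k => kernelIntervention (margX π) r k)
      (convexHull ℝ (detKernels (latentSupport π S)))
      (convexHull ℝ (detKernels (outcomeSupport S))) := by
  ext ζ
  constructor
  · rintro ⟨μ, hμ, ν, hν, rfl⟩
    obtain ⟨r, hr, rfl⟩ := (mem_SigmaS_iff hπ).1 hμ
    exact ⟨r, hr, _, mem_NS_iff.1 hν, rfl⟩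
  · rintro ⟨r, hr, k, hk, rfl⟩
    exact ⟨_, (mem_SigmaS_iff hπ).2 ⟨r, hr, rfl⟩, fun t => k (t.2.1, t.2.2) t.1,
      mem_NS_iff.2 hk, rfl⟩

end Distributions

theorem stmt_5_general {Ω Γ : Type*} [Fintype Ω] [Fintype Γ] [DecidableEq Ω]
    [Nonempty Γ]
    (π : Ω × Ω → ℝ) (hπ : IsJoint π) :
    ∀ S : Set (Ω × Γ), ∃ F : Set (Ω × Ω → ℝ), F.Finite ∧ (∀ ζ ∈ F, IsCondX ζ) ∧
      QS π S = convexHull ℝ F := by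
  classical
  intro S
  set F := image2 (fun r k => kernelIntervention (margX π) r k)
    (detKernels (latentSupport π S)) (detKernels (outcomeSupport S))
  have hQS := QS_eq_image2 hπ S
  have hFQ : F ⊆ QS π S := hQS ▸ image2_subset (subset_convexHull ℝ _) (subset_convexHull ℝ _)
  refine ⟨F, (finite_detKernels _).image2 _ (finite_detKernels _), fun ζ hζ => ?_,
    (convexHull_min hFQ (convex_QS π S)).antisymm' ?_⟩
  · obtain ⟨μ, hμ, ν, hν, rfl⟩ := hFQ hζ
    exact intervention_isCondX hμ.1 hν.1
  · rw [hQS]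
    exact LinearMap.image2_convexHull_subset _ _ _

/-- For a perfect channel `π`, each `Q_S` is a convex polytope: the convex hull of a
finite set of conditional distributions of `Ω` given `Ω`. -/
theorem stmt_5 {Ω Γ : Type*} [Fintype Ω] [Fintype Γ] [DecidableEq Ω]
    [Nonempty Ω] [Nonempty Γ]
    (π : Ω × Ω → ℝ) (hπ : IsJoint π) (hperf : ∀ x z : Ω, x ≠ z → π (x, z) = 0) :
    ∀ S : Set (Ω × Γ), ∃ F : Set (Ω × Ω → ℝ), F.Finite ∧ (∀ ζ ∈ F, IsCondX ζ) ∧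
      QS π S = convexHull ℝ F :=
  stmt_5_general π hπ
end

section
/- Let Ω and Γ be finite nonempty types and let π be an observed distribution on Ω × Ω that is a perfect channel, i.e., π(x,z) = 0 whenever x ≠ z. Then a pair (μ, ν), with μ a joint distribution on Ω × Γ and ν a conditional distribution of Ω given Ω × Γ, is compatible with π if and only if there exists S ⊆ Ω × Γ with μ ∈ Σ_S and ν ∈ N_S. -/
open Finset

/-- For a perfect channel `π`, a pair `(μ, ν)` is compatible with `π` iff `μ ∈ Σ_S` and
`ν ∈ N_S` for some `S ⊆ Ω × Γ`. -/
theorem stmt_6 {Ω Γ : Type*} [Fintype Ω] [Fintype Γ] [DecidableEq Ω]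
    [Nonempty Ω] [Nonempty Γ]
    (π : Ω × Ω → ℝ) (hπ : IsJoint π) (hperf : ∀ x z : Ω, x ≠ z → π (x, z) = 0)
    (μ : Ω × Γ → ℝ) (ν : Ω × Ω × Γ → ℝ) (hμ : IsJoint μ) (hν : IsCondXU ν) :
    Compatible π μ ν ↔ ∃ S : Set (Ω × Γ), μ ∈ SigmaS π S ∧ ν ∈ NS S := by
  constructor
  · intro hcomp
    refine ⟨{p | 0 < μ p}, ⟨hμ, ?_, fun p hp => hp⟩, hν, ?_⟩
    · intro x
      have : margX π x = ∑ z : Ω, ∑ u : Γ, μ (x, u) * ν (z, x, u) := by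
        unfold margX
        exact Finset.sum_congr rfl fun z _ => hcomp x z
      rw [this, Finset.sum_comm]
      unfold margX
      refine (Finset.sum_congr rfl fun u _ => ?_).symm
      rw [← Finset.mul_sum, hν.2 x u, mul_one]
    · intro x u hS z
      have hkey : ∀ w, w ≠ x → ν (w, x, u) = 0 := by
        intro w hw
        have h0 : π (x, w) = 0 := hperf x w (fun h => hw h.symm)
        have hc := hcomp x w
        rw [h0] at hc
        have := (Finset.sum_eq_zero_iff_of_nonneg
          (fun v _ => mul_nonneg (hμ.1 _) (hν.1 _))).mp hc.symm u (Finset.mem_univ u)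
        rcases mul_eq_zero.mp this with h | h
        · exact absurd h (ne_of_gt hS)
        · exact h
      by_cases hz : z = x
      · subst hz
        simp only [if_pos rfl]
        have hsum := hν.2 z u
        rwa [Finset.sum_eq_single_of_mem z (Finset.mem_univ z)
          (fun b _ hb => hkey b hb)] at hsum
      · rw [if_neg hz]
        exact hkey z hz
  · rintro ⟨S, ⟨hμJ, hmarg, hsupp⟩, hνC, hνS⟩
    intro x z
    have hterm : ∀ u : Γ, μ (x, u) * ν (z, x, u) =
        μ (x, u) * (if z = x then 1 else 0) := by
      intro u
      rcases lt_or_eq_of_le (hμ.1 (x, u)) with h | h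
      · rw [hνS x u (hsupp _ h) z]
      · rw [← h, zero_mul, zero_mul]
    rw [Finset.sum_congr rfl fun u _ => hterm u, ← Finset.sum_mul]
    by_cases hz : z = x
    · subst hz
      rw [if_pos rfl, mul_one]
      have : margX π z = π (z, z) := by
        unfold margX
        exact Finset.sum_eq_single_of_mem z (Finset.mem_univ z)
          (fun b _ hb => hperf z b (fun h => hb h.symm))
      rw [show (∑ u : Γ, μ (z, u)) = margX μ z from rfl, hmarg z, this]
    · rw [if_neg hz, mul_zero]
      exact hperf x z (fun h => hz h.symm)
end

section
/- Let Ω and Γ be finite nonempty types and let π be an observed distribution on Ω × Ω that is a perfect channel, i.e., π(x,z) = 0 whenever x ≠ z. Then for every S ⊆ Ω × Γ, the set Q_S = { φ(μ,ν) : μ ∈ Σ_S, ν ∈ N_S } is a convex subset of the space of functions Ω × Ω → ℝ. -/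
open Finset

/-- For a perfect channel `π`, each `Q_S` is convex. -/
theorem stmt_7 {Ω Γ : Type*} [Fintype Ω] [Fintype Γ] [DecidableEq Ω]
    [Nonempty Ω] [Nonempty Γ]
    (π : Ω × Ω → ℝ) (hπ : IsJoint π) (hperf : ∀ x z : Ω, x ≠ z → π (x, z) = 0) :
    ∀ S : Set (Ω × Γ), Convex ℝ (QS π S) := by
  intro S
  rintro ζ1 ⟨μ1, ⟨hμ1J, hμ1M, hμ1S⟩, ν1, ⟨hν1C, hν1S⟩, rfl⟩
         ζ2 ⟨μ2, ⟨hμ2J, hμ2M, hμ2S⟩, ν2, ⟨hν2C, hν2S⟩, rfl⟩ a b ha hb hab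
  classical
  set μ : Ω × Γ → ℝ := fun p => a * μ1 p + b * μ2 p with hμ
  have hm1 : ∀ u, 0 ≤ margU μ1 u := fun u => Finset.sum_nonneg fun x _ => hμ1J.1 _
  have hm2 : ∀ u, 0 ≤ margU μ2 u := fun u => Finset.sum_nonneg fun x _ => hμ2J.1 _
  have hD : ∀ u, margU μ u = a * margU μ1 u + b * margU μ2 u := by
    intro u
    simp only [margU, hμ, Finset.sum_add_distrib, Finset.mul_sum]
  have hDnn : ∀ u, 0 ≤ margU μ u := by
    intro u
    rw [hD u]
    exact add_nonneg (mul_nonneg ha (hm1 u)) (mul_nonneg hb (hm2 u))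
  set ν : Ω × Ω × Γ → ℝ := fun p =>
    if 0 < margU μ p.2.2 then
      (a * margU μ1 p.2.2 * ν1 p + b * margU μ2 p.2.2 * ν2 p) / margU μ p.2.2
    else if p.1 = p.2.1 then 1 else 0 with hν
  have hμJ : IsJoint μ := by
    constructor
    · intro p
      exact add_nonneg (mul_nonneg ha (hμ1J.1 p)) (mul_nonneg hb (hμ2J.1 p))
    · simp only [hμ, Finset.sum_add_distrib, ← Finset.mul_sum, hμ1J.2, hμ2J.2]
      linarith
  have hμM : ∀ x, margX μ x = margX π x := by
    intro x
    have : margX μ x = a * margX μ1 x + b * margX μ2 x := by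
      simp only [margX, hμ, Finset.sum_add_distrib, Finset.mul_sum]
    rw [this, hμ1M x, hμ2M x, ← add_mul, hab, one_mul]
  have hμS : ∀ p, 0 < μ p → p ∈ S := by
    intro p hp
    by_contra hns
    have e1 : μ1 p = 0 := le_antisymm (le_of_not_gt fun h => hns (hμ1S p h)) (hμ1J.1 p)
    have e2 : μ2 p = 0 := le_antisymm (le_of_not_gt fun h => hns (hμ2S p h)) (hμ2J.1 p)
    simp [hμ, e1, e2] at hp
  have hνC : IsCondXU ν := by
    constructor
    · intro p
      simp only [hν]
      split
      · next h =>
        apply div_nonneg _ (le_of_lt h)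
        exact add_nonneg (mul_nonneg (mul_nonneg ha (hm1 _)) (hν1C.1 _))
          (mul_nonneg (mul_nonneg hb (hm2 _)) (hν2C.1 _))
      · split <;> norm_num
    · intro x u
      by_cases h : 0 < margU μ u
      · simp only [hν, if_pos h]
        rw [← Finset.sum_div]
        have : ∑ z : Ω, (a * margU μ1 u * ν1 (z, x, u) + b * margU μ2 u * ν2 (z, x, u))
            = margU μ u := by
          rw [Finset.sum_add_distrib, ← Finset.mul_sum, ← Finset.mul_sum,
            hν1C.2 x u, hν2C.2 x u, hD]
          ring
        rw [this, div_self h.ne']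
      · simp [hν, h]
  have hνS : ∀ x u, (x, u) ∈ S → ∀ z, ν (z, x, u) = if z = x then 1 else 0 := by
    intro x u hS z
    by_cases h : 0 < margU μ u
    · simp only [hν, if_pos h, hν1S x u hS z, hν2S x u hS z]
      by_cases hz : z = x
      · subst hz
        simp only [eq_self_iff_true, if_true, mul_one]
        rw [← hD u]
        exact div_self h.ne'
      · simp [hz]
    · simp [hν, h]
  refine ⟨μ, ⟨hμJ, hμM, hμS⟩, ν, ⟨hνC, hνS⟩, ?_⟩
  funext p
  have key : ∀ u, margU μ u * ν (p.1, p.2, u) =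
      a * (margU μ1 u * ν1 (p.1, p.2, u)) + b * (margU μ2 u * ν2 (p.1, p.2, u)) := by
    intro u
    by_cases h : 0 < margU μ u
    · simp only [hν, if_pos h]
      field_simp
    · have h0 : margU μ u = 0 := le_antisymm (not_lt.1 h) (hDnn u)
      have hsum : a * margU μ1 u + b * margU μ2 u = 0 := by rw [← hD u]; exact h0
      have h1 : a * margU μ1 u = 0 := by
        nlinarith [mul_nonneg ha (hm1 u), mul_nonneg hb (hm2 u)]
      have h2 : b * margU μ2 u = 0 := by linarith
      rw [h0, zero_mul, ← mul_assoc, ← mul_assoc, h1, h2]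
      ring
  simp only [Pi.add_apply, Pi.smul_apply, smul_eq_mul, intervention]
  rw [Finset.mul_sum, Finset.mul_sum, ← Finset.sum_add_distrib]
  exact (Finset.sum_congr rfl fun u _ => key u).symm
end

section
/- Let Ω and Γ be finite nonempty types, let π be an observed distribution on Ω × Ω that is a perfect channel (π(x,z) = 0 whenever x ≠ z), and let S ⊆ Ω × Γ. Then every extreme point of Q_S = { φ(μ,ν) : μ ∈ Σ_S, ν ∈ N_S } is of the form φ(μ,ν) where μ is an extreme point of Σ_S and ν is an extreme point of N_S. -/
open Finset

lemma isClosed_SigmaS {Ω Γ : Type*} [Fintype Ω] [Fintype Γ] (π : Ω × Ω → ℝ)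
    (S : Set (Ω × Γ)) : IsClosed (SigmaS π S) := by
  have hrw : SigmaS π S =
      ({μ : Ω × Γ → ℝ | ∀ p, 0 ≤ μ p} ∩ {μ | ∑ p : Ω × Γ, μ p = 1}) ∩
      ({μ | ∀ x, margX μ x = margX π x} ∩ {μ | ∀ p, p ∉ S → μ p ≤ 0}) := by
    ext μ
    simp only [SigmaS, IsJoint, Set.mem_setOf_eq, Set.mem_inter_iff]
    constructor
    · rintro ⟨⟨h1, h2⟩, h3, h4⟩
      exact ⟨⟨h1, h2⟩, h3, fun p hp => not_lt.1 fun hlt => hp (h4 p hlt)⟩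
    · rintro ⟨⟨h1, h2⟩, h3, h4⟩
      exact ⟨⟨h1, h2⟩, h3, fun p hlt => by
        by_contra hp; exact absurd (h4 p hp) (not_le.2 hlt)⟩
  rw [hrw]
  refine IsClosed.inter (IsClosed.inter ?_ ?_) (IsClosed.inter ?_ ?_)
  · have : {μ : Ω × Γ → ℝ | ∀ p, 0 ≤ μ p} = ⋂ p, {μ | 0 ≤ μ p} := by
      ext; simp
    rw [this]
    exact isClosed_iInter fun p => isClosed_le continuous_const (continuous_apply p)
  · exact isClosed_eq (continuous_finset_sum _ fun p _ => continuous_apply p)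
      continuous_const
  · have : {μ : Ω × Γ → ℝ | ∀ x, margX μ x = margX π x} =
        ⋂ x, {μ | margX μ x = margX π x} := by ext; simp
    rw [this]
    exact isClosed_iInter fun x => isClosed_eq
      (continuous_finset_sum _ fun u _ => continuous_apply (x, u)) continuous_const
  · have : {μ : Ω × Γ → ℝ | ∀ p, p ∉ S → μ p ≤ 0} =
        ⋂ p, {μ | p ∉ S → μ p ≤ 0} := by ext; simp
    rw [this]
    refine isClosed_iInter fun p => ?_
    by_cases hp : p ∈ S
    · simp [hp]
    · have : {μ : Ω × Γ → ℝ | p ∉ S → μ p ≤ 0} = {μ | μ p ≤ 0} := by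
        ext; simp [hp]
      rw [this]
      exact isClosed_le (continuous_apply p) continuous_const

lemma isCompact_SigmaS {Ω Γ : Type*} [Fintype Ω] [Fintype Γ] (π : Ω × Ω → ℝ)
    (S : Set (Ω × Γ)) : IsCompact (SigmaS π S) := by
  refine IsCompact.of_isClosed_subset (isCompact_Icc (a := (0 : Ω × Γ → ℝ)) (b := 1))
    (isClosed_SigmaS π S) ?_
  rintro μ ⟨⟨h1, h2⟩, -, -⟩
  refine ⟨fun p => h1 p, fun p => ?_⟩
  calc μ p ≤ ∑ q : Ω × Γ, μ q := Finset.single_le_sum (fun q _ => h1 q) (mem_univ p)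
  _ = 1 := h2

lemma isClosed_NS {Ω Γ : Type*} [Fintype Ω] [Fintype Γ] [DecidableEq Ω]
    (S : Set (Ω × Γ)) : IsClosed (NS (Ω := Ω) S) := by
  have hrw : NS (Ω := Ω) S =
      ({ν : Ω × Ω × Γ → ℝ | ∀ p, 0 ≤ ν p} ∩
       {ν | ∀ x : Ω, ∀ u : Γ, ∑ z : Ω, ν (z, x, u) = 1}) ∩
      {ν | ∀ x u, (x, u) ∈ S → ∀ z, ν (z, x, u) = if z = x then 1 else 0} := by
    ext ν; simp [NS, IsCondXU]; try tauto
  rw [hrw]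
  refine IsClosed.inter (IsClosed.inter ?_ ?_) ?_
  · have : {ν : Ω × Ω × Γ → ℝ | ∀ p, 0 ≤ ν p} = ⋂ p, {ν | 0 ≤ ν p} := by ext; simp
    rw [this]
    exact isClosed_iInter fun p => isClosed_le continuous_const (continuous_apply p)
  · have : {ν : Ω × Ω × Γ → ℝ | ∀ x : Ω, ∀ u : Γ, ∑ z : Ω, ν (z, x, u) = 1} =
        ⋂ x, ⋂ u, {ν | ∑ z : Ω, ν (z, x, u) = 1} := by ext; simp
    rw [this]
    exact isClosed_iInter fun x => isClosed_iInter fun u => isClosed_eq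
      (continuous_finset_sum _ fun z _ => continuous_apply (z, x, u)) continuous_const
  · have : {ν : Ω × Ω × Γ → ℝ | ∀ x u, (x, u) ∈ S → ∀ z,
        ν (z, x, u) = if z = x then 1 else 0} =
        ⋂ x, ⋂ u, ⋂ z, {ν | (x, u) ∈ S → ν (z, x, u) = if z = x then 1 else 0} := by
      ext; simp; try tauto
    rw [this]
    refine isClosed_iInter fun x => isClosed_iInter fun u => isClosed_iInter fun z => ?_
    by_cases hp : (x, u) ∈ S
    · have : {ν : Ω × Ω × Γ → ℝ | (x, u) ∈ S → ν (z, x, u) = if z = x then 1 else 0} =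
          {ν | ν (z, x, u) = if z = x then 1 else 0} := by ext; simp [hp]
      rw [this]
      exact isClosed_eq (continuous_apply (z, x, u)) continuous_const
    · have : {ν : Ω × Ω × Γ → ℝ | (x, u) ∈ S → ν (z, x, u) = if z = x then 1 else 0} =
          Set.univ := by ext; simp [hp]
      rw [this]; exact isClosed_univ

lemma isCompact_NS {Ω Γ : Type*} [Fintype Ω] [Fintype Γ] [DecidableEq Ω]
    (S : Set (Ω × Γ)) : IsCompact (NS (Ω := Ω) S) := by
  refine IsCompact.of_isClosed_subset (isCompact_Icc (a := (0 : Ω × Ω × Γ → ℝ)) (b := 1))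
    (isClosed_NS S) ?_
  rintro ν ⟨⟨h1, h2⟩, -⟩
  refine ⟨fun p => h1 p, fun p => ?_⟩
  calc ν p = ν (p.1, p.2.1, p.2.2) := by rfl
  _ ≤ ∑ z : Ω, ν (z, p.2.1, p.2.2) :=
      Finset.single_le_sum (fun z _ => h1 (z, p.2.1, p.2.2)) (mem_univ p.1)
  _ = 1 := h2 p.2.1 p.2.2

lemma fiber_extreme {ι κ : Type*} [Fintype ι] [Fintype κ]
    (s : Set (ι → ℝ)) (hcomp : IsCompact s)
    (f : (ι → ℝ) → (κ → ℝ)) (hf : Continuous f)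
    (haff : ∀ (a b : ℝ) (x y : ι → ℝ), f (a • x + b • y) = a • f x + b • f y)
    (ζ : κ → ℝ) (hζmem : ∃ μ ∈ s, f μ = ζ)
    (hext : ∀ x ∈ f '' s, ∀ y ∈ f '' s, ζ ∈ openSegment ℝ x y → x = ζ ∧ y = ζ) :
    ∃ μ ∈ Set.extremePoints ℝ s, f μ = ζ := by
  set t := s ∩ f ⁻¹' {ζ} with ht
  have htne : t.Nonempty := by
    obtain ⟨μ, hμ, hfμ⟩ := hζmem
    exact ⟨μ, hμ, by simp [hfμ]⟩
  have htcomp : IsCompact t := hcomp.inter_right (isClosed_singleton.preimage hf)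
  obtain ⟨μ, hμ⟩ := htcomp.extremePoints_nonempty htne
  rw [mem_extremePoints] at hμ
  have hfμ : f μ = ζ := hμ.1.2
  refine ⟨μ, ?_, hfμ⟩
  rw [mem_extremePoints]
  refine ⟨hμ.1.1, fun x hx y hy hseg => ?_⟩
  obtain ⟨a, b, ha, hb, hab, heq⟩ := hseg
  have hseg' : ζ ∈ openSegment ℝ (f x) (f y) := by
    refine ⟨a, b, ha, hb, hab, ?_⟩
    rw [← haff, heq, hfμ]
  obtain ⟨hx1, hy1⟩ := hext (f x) ⟨x, hx, rfl⟩ (f y) ⟨y, hy, rfl⟩ hseg'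
  have hxt : x ∈ t := ⟨hx, by simp [hx1]⟩
  have hyt : y ∈ t := ⟨hy, by simp [hy1]⟩
  exact hμ.2 x hxt y hyt ⟨a, b, ha, hb, hab, heq⟩

/-- Every extreme point of `Q_S` is of the form `φ(μ, ν)` where `μ` is an extreme point of
`Σ_S` and `ν` is an extreme point of `N_S`. -/
theorem stmt_8 {Ω Γ : Type*} [Fintype Ω] [Fintype Γ] [DecidableEq Ω]
    [Nonempty Ω] [Nonempty Γ]
    (π : Ω × Ω → ℝ) (hπ : IsJoint π) (hperf : ∀ x z : Ω, x ≠ z → π (x, z) = 0)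
    (S : Set (Ω × Γ)) :
    ∀ ζ ∈ Set.extremePoints ℝ (QS π S),
      ∃ μ ∈ Set.extremePoints ℝ (SigmaS π S), ∃ ν ∈ Set.extremePoints ℝ (NS S),
        ζ = intervention μ ν := by
  intro ζ hζ
  rw [mem_extremePoints] at hζ
  obtain ⟨μ₀, hμ₀, ν₀, hν₀, hζeq⟩ := hζ.1
  have haff1 : ∀ (a b : ℝ) (x y : Ω × Γ → ℝ),
      (fun μ => intervention μ ν₀) (a • x + b • y)
        = a • (fun μ => intervention μ ν₀) x + b • (fun μ => intervention μ ν₀) y := by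
    intro a b x y
    funext p
    simp only [intervention, margU, Pi.add_apply, Pi.smul_apply, smul_eq_mul]
    rw [Finset.mul_sum, Finset.mul_sum, ← Finset.sum_add_distrib]
    refine Finset.sum_congr rfl fun u _ => ?_
    rw [Finset.sum_add_distrib, ← Finset.mul_sum, ← Finset.mul_sum]
    ring
  have hf1cont : Continuous (fun μ : Ω × Γ → ℝ => intervention μ ν₀) := by
    refine continuous_pi fun p => ?_
    exact continuous_finset_sum _ fun u _ =>
      (continuous_finset_sum _ fun x _ => continuous_apply (x, u)).mul continuous_const
  have hext1 : ∀ x ∈ (fun μ => intervention μ ν₀) '' SigmaS π S,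
      ∀ y ∈ (fun μ => intervention μ ν₀) '' SigmaS π S,
      ζ ∈ openSegment ℝ x y → x = ζ ∧ y = ζ := by
    rintro x ⟨m, hm, rfl⟩ y ⟨m', hm', rfl⟩ hseg
    exact hζ.2 _ ⟨m, hm, ν₀, hν₀, rfl⟩ _ ⟨m', hm', ν₀, hν₀, rfl⟩ hseg
  obtain ⟨μs, hμs, hμseq⟩ := fiber_extreme (SigmaS π S) (isCompact_SigmaS π S)
    (fun μ => intervention μ ν₀) hf1cont haff1 ζ ⟨μ₀, hμ₀, hζeq.symm⟩ hext1
  have haff2 : ∀ (a b : ℝ) (x y : Ω × Ω × Γ → ℝ),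
      (fun ν => intervention μs ν) (a • x + b • y)
        = a • (fun ν => intervention μs ν) x + b • (fun ν => intervention μs ν) y := by
    intro a b x y
    funext p
    simp only [intervention, Pi.add_apply, Pi.smul_apply, smul_eq_mul]
    rw [Finset.mul_sum, Finset.mul_sum, ← Finset.sum_add_distrib]
    refine Finset.sum_congr rfl fun u _ => ?_
    ring
  have hf2cont : Continuous (fun ν : Ω × Ω × Γ → ℝ => intervention μs ν) := by
    refine continuous_pi fun p => ?_
    exact continuous_finset_sum _ fun u _ =>
      continuous_const.mul (continuous_apply (p.1, p.2, u))
  have hμsS : μs ∈ SigmaS π S := extremePoints_subset hμs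
  have hext2 : ∀ x ∈ (fun ν => intervention μs ν) '' NS S,
      ∀ y ∈ (fun ν => intervention μs ν) '' NS S,
      ζ ∈ openSegment ℝ x y → x = ζ ∧ y = ζ := by
    rintro x ⟨n, hn, rfl⟩ y ⟨n', hn', rfl⟩ hseg
    exact hζ.2 _ ⟨μs, hμsS, n, hn, rfl⟩ _ ⟨μs, hμsS, n', hn', rfl⟩ hseg
  obtain ⟨νs, hνs, hνseq⟩ := fiber_extreme (NS S) (isCompact_NS S)
    (fun ν => intervention μs ν) hf2cont haff2 ζ ⟨ν₀, hν₀, hμseq⟩ hext2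
  exact ⟨μs, hμs, νs, hνs, hνseq.symm⟩
end

section
/- Let Ω and Γ be finite nonempty types, let π be an observed distribution on Ω × Ω, and let S ⊆ Ω × Γ. Then every extreme point of Σ_S is of the form μ^f for some function f : Ω → Γ contained in S (i.e., (x, f(x)) ∈ S for every x ∈ Ω with π_X(x) > 0), where μ^f(x,u) = π_X(x) if u = f(x) and 0 otherwise. -/
open Finset

/-- Every extreme point of `Σ_S` is of the form `μ^f` for some `f : Ω → Γ` contained in
`S`, where `μ^f (x, u) = π_X(x)` if `u = f x` and `0` otherwise. -/
theorem stmt_9 {Ω Γ : Type*} [Fintype Ω] [Fintype Γ] [DecidableEq Γ]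
    [Nonempty Ω] [Nonempty Γ]
    (π : Ω × Ω → ℝ) (hπ : IsJoint π) (S : Set (Ω × Γ)) :
    ∀ μ ∈ Set.extremePoints ℝ (SigmaS π S),
      ∃ f : Ω → Γ, (∀ x : Ω, 0 < margX π x → (x, f x) ∈ S) ∧
        μ = fun p : Ω × Γ => if p.2 = f p.1 then margX π p.1 else 0 := by

  classical
  intro μ hμ
  obtain ⟨hμS, hext⟩ := hμ
  obtain ⟨⟨hnn, hsum⟩, hmarg, hsupp⟩ := hμS
  -- key uniqueness claim
  have key : ∀ x : Ω, ∀ u v : Γ, 0 < μ (x, u) → 0 < μ (x, v) → u = v := by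
    intro x u v hu hv
    by_contra hne
    have hpne : ((x, u) : Ω × Γ) ≠ (x, v) := by
      simp [Prod.ext_iff, hne]
    set ε := min (μ (x, u)) (μ (x, v)) with hεdef
    have hε0 : 0 < ε := lt_min hu hv
    set δ : Ω × Γ → ℝ := fun p =>
      ε * ((if p = (x, u) then 1 else 0) - (if p = (x, v) then 1 else 0)) with hδdef
    have hδu : δ (x, u) = ε := by simp [hδdef, hpne]
    have hδv : δ (x, v) = -ε := by simp [hδdef, hpne.symm]
    have hδother : ∀ p, p ≠ (x, u) → p ≠ (x, v) → δ p = 0 := by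
      intro p h1 h2; simp [hδdef, h1, h2]
    have hδrow : ∀ y : Ω, ∑ w : Γ, δ (y, w) = 0 := by
      intro y
      by_cases hy : y = x
      · subst hy
        have : ∀ w : Γ, δ (y, w)
            = ε * ((if w = u then 1 else 0) - (if w = v then 1 else 0)) := by
          intro w; simp [hδdef, Prod.ext_iff]
        simp only [this, ← Finset.mul_sum, Finset.sum_sub_distrib]
        simp
      · have : ∀ w : Γ, δ (y, w) = 0 := by
          intro w
          apply hδother <;> simp [Prod.ext_iff, hy]
        simp [this]
    have hδsum : ∑ p : Ω × Γ, δ p = 0 := by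
      rw [Fintype.sum_prod_type]
      simp [hδrow]
    set μ₁ : Ω × Γ → ℝ := fun p => μ p + δ p with hμ₁def
    set μ₂ : Ω × Γ → ℝ := fun p => μ p - δ p with hμ₂def
    have hεu : ε ≤ μ (x, u) := min_le_left _ _
    have hεv : ε ≤ μ (x, v) := min_le_right _ _
    have mem1 : μ₁ ∈ SigmaS π S := by
      refine ⟨⟨?_, ?_⟩, ?_, ?_⟩
      · intro p
        by_cases h1 : p = (x, u)
        · subst h1; rw [hμ₁def]; simp only [hδu]; linarith [hnn (x, u)]
        by_cases h2 : p = (x, v)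
        · subst h2; rw [hμ₁def]; simp only [hδv]; linarith
        · rw [hμ₁def]; simp only [hδother p h1 h2]; linarith [hnn p]
      · rw [hμ₁def]; simp only [Finset.sum_add_distrib, hδsum, hsum]; ring
      · intro y
        rw [hμ₁def]
        simp only [margX, Finset.sum_add_distrib, hδrow y]
        rw [add_zero]; exact hmarg y
      · intro p hp
        by_cases h1 : p = (x, u)
        · subst h1; exact hsupp _ hu
        by_cases h2 : p = (x, v)
        · subst h2; exact hsupp _ hv
        · apply hsupp
          rw [hμ₁def] at hp; simp only [hδother p h1 h2] at hp; linarith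
    have mem2 : μ₂ ∈ SigmaS π S := by
      refine ⟨⟨?_, ?_⟩, ?_, ?_⟩
      · intro p
        by_cases h1 : p = (x, u)
        · subst h1; rw [hμ₂def]; simp only [hδu]; linarith
        by_cases h2 : p = (x, v)
        · subst h2; rw [hμ₂def]; simp only [hδv]; linarith [hnn (x, v)]
        · rw [hμ₂def]; simp only [hδother p h1 h2]; linarith [hnn p]
      · rw [hμ₂def]; simp only [Finset.sum_sub_distrib, hδsum, hsum]; ring
      · intro y
        rw [hμ₂def]
        simp only [margX, Finset.sum_sub_distrib, hδrow y]
        rw [sub_zero]; exact hmarg y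
      · intro p hp
        by_cases h1 : p = (x, u)
        · subst h1; exact hsupp _ hu
        by_cases h2 : p = (x, v)
        · subst h2; exact hsupp _ hv
        · apply hsupp
          rw [hμ₂def] at hp; simp only [hδother p h1 h2] at hp; linarith
    have hseg : μ ∈ openSegment ℝ μ₁ μ₂ := by
      refine ⟨1/2, 1/2, by norm_num, by norm_num, by norm_num, ?_⟩
      funext p
      simp only [hμ₁def, hμ₂def, Pi.add_apply, Pi.smul_apply, smul_eq_mul]
      ring
    have := hext mem1 mem2 hseg
    have : μ₁ (x, u) = μ (x, u) := by rw [this]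
    rw [hμ₁def] at this; simp only [hδu] at this; linarith
  -- nonnegativity of margX π
  have hπnn : ∀ y : Ω, 0 ≤ margX π y := by
    intro y
    exact Finset.sum_nonneg fun z _ => hπ.1 (y, z)
  -- all-zero rows when marginal is zero
  have hzero : ∀ y : Ω, ¬ 0 < margX π y → ∀ w : Γ, μ (y, w) = 0 := by
    intro y hy w
    have h0 : margX π y = 0 := le_antisymm (not_lt.mp hy) (hπnn y)
    have hs : ∑ w : Γ, μ (y, w) = 0 := by
      have := hmarg y; rw [h0] at this; exact this
    exact (Finset.sum_eq_zero_iff_of_nonneg (fun w _ => hnn (y, w))).mp hs w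
      (Finset.mem_univ w)
  -- choose f
  set f : Ω → Γ := fun y =>
    if h : ∃ w : Γ, 0 < μ (y, w) then h.choose else Classical.arbitrary Γ
    with hfdef
  have hfspec : ∀ y : Ω, 0 < margX π y → 0 < μ (y, f y) := by
    intro y hy
    have hex : ∃ w : Γ, 0 < μ (y, w) := by
      have hlt : (0:ℝ) < ∑ w : Γ, μ (y, w) := by
        have h := hmarg y; simp only [margX] at h; rw [h]; exact hy
      obtain ⟨w, _, hw⟩ := Finset.exists_lt_of_sum_lt
        (f := fun _ : Γ => (0:ℝ)) (by simpa using hlt)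
      exact ⟨w, hw⟩
    rw [hfdef]; simp only [hex, dif_pos]
    exact hex.choose_spec
  refine ⟨f, fun y hy => hsupp _ (hfspec y hy), ?_⟩
  funext p
  obtain ⟨y, w⟩ := p
  show μ (y, w) = if w = f y then margX π y else 0
  by_cases hy : 0 < margX π y
  · by_cases hw : w = f y
    · subst hw
      have hrow : ∑ w : Γ, μ (y, w) = margX π y := by
        have h := hmarg y; simpa [margX] using h
      have hsingle : ∑ w : Γ, μ (y, w) = μ (y, f y) := by
        refine Finset.sum_eq_single (f y) ?_ ?_
        · intro b _ hb
          by_contra hb0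
          have : 0 < μ (y, b) := lt_of_le_of_ne (hnn (y, b)) (Ne.symm hb0)
          exact hb (key y b (f y) this (hfspec y hy))
        · intro h; exact absurd (Finset.mem_univ (f y)) h
      rw [if_pos rfl, ← hrow, hsingle]
    · simp only [if_neg hw]
      by_contra h0
      have : 0 < μ (y, w) := lt_of_le_of_ne (hnn (y, w)) (Ne.symm h0)
      exact hw (key y w (f y) this (hfspec y hy))
  · have h0 : margX π y = 0 := le_antisymm (not_lt.mp hy) (hπnn y)
    simp only [hzero y hy w, h0, if_neg, ite_self]
end

section
/- Let Ω and Γ be finite nonempty types, let π be an observed distribution on Ω × Ω that is a perfect channel (π(x,z) = 0 whenever x ≠ z), let f : Ω → Γ, and set S_f = {(x, f(x)) : x ∈ Ω}. Then a conditional distribution ζ of Ω given Ω belongs to { φ(μ,ν) : μ ∈ Σ_{S_f}, ν ∈ N_{S_f} } if and only if for every x ∈ Ω, ζ(x,x) ≥ Σ_{x' ∈ Ω : f(x') = f(x)} π_X(x'). -/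
open Finset

/-- For a perfect channel `π` and `f : Ω → Γ`, with `S_f = {(x, f x) : x ∈ Ω}`, a
conditional distribution `ζ` belongs to `φ(Σ_{S_f}, N_{S_f})` iff
`ζ(x,x) ≥ ∑_{x' : f x' = f x} π_X(x')` for every `x`. -/
theorem stmt_11 {Ω Γ : Type*} [Fintype Ω] [Fintype Γ] [DecidableEq Ω] [DecidableEq Γ]
    [Nonempty Ω] [Nonempty Γ]
    (π : Ω × Ω → ℝ) (hπ : IsJoint π) (hperf : ∀ x z : Ω, x ≠ z → π (x, z) = 0)
    (f : Ω → Γ) (ζ : Ω × Ω → ℝ) (hζ : IsCondX ζ) :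
    ζ ∈ QS π {p : Ω × Γ | p.2 = f p.1} ↔
      ∀ x : Ω, ∑ x' ∈ Finset.univ.filter (fun x' : Ω => f x' = f x), margX π x' ≤
        ζ (x, x) := by

  classical
  constructor
  · rintro ⟨μ, ⟨⟨hμ0, hμ1⟩, hμm, hμsupp⟩, ν, ⟨⟨hν0, hν1⟩, hνdet⟩, rfl⟩ x
    have hzero : ∀ x' u, u ≠ f x' → μ (x', u) = 0 := by
      intro x' u hu
      by_contra hne
      exact hu (hμsupp _ (lt_of_le_of_ne (hμ0 _) (Ne.symm hne)))
    have hmarg : ∀ x', margX μ x' = μ (x', f x') := by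
      intro x'
      rw [margX, Finset.sum_eq_single (f x')]
      · intro u _ hu; exact hzero x' u hu
      · intro h; exact absurd (Finset.mem_univ _) h
    have hmu : margU μ (f x)
        = ∑ x' ∈ Finset.univ.filter (fun x' : Ω => f x' = f x), margX π x' := by
      rw [margU, eq_comm]
      rw [show (∑ x' : Ω, μ (x', f x))
          = ∑ x' ∈ Finset.univ.filter (fun x' : Ω => f x' = f x), μ (x', f x) by
        rw [eq_comm]
        apply Finset.sum_subset (Finset.filter_subset _ _)
        intro x' _ hx'
        simp only [Finset.mem_filter, Finset.mem_univ, true_and] at hx'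
        exact hzero x' (f x) (fun hh => hx' hh.symm)]
      apply Finset.sum_congr rfl
      intro x' hx'
      simp only [Finset.mem_filter, Finset.mem_univ, true_and] at hx'
      rw [← hμm, hmarg, hx']
    have hterm : margU μ (f x) * ν (x, x, f x) = margU μ (f x) := by
      rw [hνdet x (f x) rfl x, if_pos rfl, mul_one]
    calc ∑ x' ∈ Finset.univ.filter (fun x' : Ω => f x' = f x), margX π x'
        = margU μ (f x) * ν (x, x, f x) := by rw [hterm, hmu]
      _ ≤ ∑ u : Γ, margU μ u * ν (x, x, u) := by
          apply Finset.single_le_sum (f := fun u => margU μ u * ν (x, x, u))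
          · intro u _
            exact mul_nonneg (Finset.sum_nonneg fun _ _ => hμ0 _) (hν0 _)
          · exact Finset.mem_univ _
      _ = intervention μ ν (x, x) := rfl
  · intro h
    have hπm0 : ∀ x, 0 ≤ margX π x := fun x => Finset.sum_nonneg fun u _ => hπ.1 _
    have hπsum : (∑ x, margX π x) = 1 := by
      rw [← hπ.2, Fintype.sum_prod_type]; rfl
    set s : Ω → ℝ :=
      fun x => ∑ x' ∈ Finset.univ.filter (fun x' : Ω => f x' = f x), margX π x'
      with hsdef
    have hs0 : ∀ x, 0 ≤ s x := fun x => Finset.sum_nonneg fun _ _ => hπm0 _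
    have hs1 : ∀ x, s x ≤ 1 := by
      intro x
      rw [← hπsum]
      exact Finset.sum_le_sum_of_subset_of_nonneg (Finset.filter_subset _ _)
        (fun i _ _ => hπm0 i)
    have hsle : ∀ x, s x ≤ ζ (x, x) := h
    set d : Ω → Ω → ℝ := fun z x => if z = x then (1:ℝ) else 0 with hddef
    have hd0 : ∀ z x, 0 ≤ d z x := by
      intro z x; rw [hddef]; dsimp only; split <;> norm_num
    have hdsum : ∀ x : Ω, (∑ z : Ω, d z x) = 1 := by
      intro x; simp [hddef]
    set μ : Ω × Γ → ℝ := fun p => if p.2 = f p.1 then margX π p.1 else 0 with hμdef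
    set ν : Ω × Ω × Γ → ℝ := fun p =>
      if p.2.2 = f p.2.1 then d p.1 p.2.1
      else if s p.2.1 = 1 then d p.1 p.2.1
      else (ζ (p.1, p.2.1) - d p.1 p.2.1 * s p.2.1) / (1 - s p.2.1) with hνdef
    have hμX : ∀ x, margX μ x = margX π x := by
      intro x
      simp [margX, hμdef, Finset.sum_ite_eq']
    have hμU : ∀ u, margU μ u
        = ∑ x' ∈ Finset.univ.filter (fun x' : Ω => f x' = u), margX π x' := by
      intro u
      rw [Finset.sum_filter, margU]
      apply Finset.sum_congr rfl
      intro x' _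
      simp only [hμdef]
      by_cases hx : f x' = u
      · simp [hx]
      · rw [if_neg (fun hh : u = f x' => hx hh.symm), if_neg hx]
    have hμUf : ∀ x, margU μ (f x) = s x := fun x => hμU (f x)
    have hμUsum : (∑ u, margU μ u) = 1 := by
      simp only [margU]
      rw [Finset.sum_comm]
      calc (∑ x : Ω, ∑ u : Γ, μ (x, u)) = ∑ x, margX μ x := rfl
        _ = ∑ x, margX π x := by simp [hμX]
        _ = 1 := hπsum
    have hμU0 : ∀ u, 0 ≤ margU μ u := by
      intro u
      apply Finset.sum_nonneg
      intro x _
      simp only [hμdef]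
      split
      · exact hπm0 x
      · exact le_refl 0
    -- special case: s x = 1 forces ζ (z, x) = d z x
    have hdeg : ∀ z x, s x = 1 → ζ (z, x) = d z x := by
      intro z x hsx
      have hxx1 : ζ (x, x) = 1 := by
        have hle : ζ (x, x) ≤ ∑ z' : Ω, ζ (z', x) :=
          Finset.single_le_sum (f := fun z' => ζ (z', x))
            (fun i _ => hζ.1 _) (Finset.mem_univ x)
        rw [hζ.2 x] at hle
        have := hsle x; rw [hsx] at this
        linarith
      by_cases hzx : z = x
      · rw [hzx, hxx1, hddef]; simp
      · have hpair : ζ (z, x) + ζ (x, x) ≤ ∑ z' : Ω, ζ (z', x) := by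
          have hsub : ({z, x} : Finset Ω) ⊆ Finset.univ := Finset.subset_univ _
          have := Finset.sum_le_sum_of_subset_of_nonneg hsub
            (fun i _ _ => hζ.1 (i, x))
          rwa [Finset.sum_pair hzx] at this
        rw [hζ.2 x] at hpair
        have h0 : ζ (z, x) ≤ 0 := by linarith
        have : ζ (z, x) = 0 := le_antisymm h0 (hζ.1 _)
        rw [this, hddef]; simp [hzx]
      done
    refine ⟨μ, ⟨⟨?_, ?_⟩, hμX, ?_⟩, ν, ⟨⟨?_, ?_⟩, ?_⟩, ?_⟩
    · intro p
      simp only [hμdef]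
      split
      · exact hπm0 _
      · exact le_refl 0
    · rw [Fintype.sum_prod_type]
      calc (∑ x : Ω, ∑ u : Γ, μ (x, u)) = ∑ x, margX μ x := rfl
        _ = ∑ x, margX π x := by simp [hμX]
        _ = 1 := hπsum
    · intro p hp
      simp only [hμdef] at hp
      by_contra hnp
      simp only [Set.mem_setOf_eq] at hnp
      rw [if_neg hnp] at hp
      exact lt_irrefl 0 hp
    · rintro ⟨z, x, u⟩
      simp only [hνdef]
      split
      · exact hd0 _ _
      · split
        · exact hd0 _ _
        · rename_i hsx
          apply div_nonneg
          · rw [hddef]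
            dsimp only
            split
            · rename_i hzx
              rw [hzx]
              have := hsle x
              linarith
            · have := hζ.1 (z, x)
              linarith
          · have := hs1 x; linarith
    · intro x u
      simp only [hνdef]
      by_cases hu : u = f x
      · simp [hu, hdsum]
      · simp only [if_neg hu]
        by_cases hsx : s x = 1
        · simp [hsx, hdsum]
        · simp only [if_neg hsx]
          rw [← Finset.sum_div, Finset.sum_sub_distrib, hζ.2 x, ← Finset.sum_mul,
            hdsum, one_mul, div_self (sub_ne_zero.mpr (fun hh => hsx hh.symm))]
    · intro x u hu z
      simp only [Set.mem_setOf_eq] at hu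
      simp only [hνdef, hu, if_pos rfl, hddef]
    · funext p
      obtain ⟨z, x⟩ := p
      set V : ℝ := if s x = 1 then d z x
        else (ζ (z, x) - d z x * s x) / (1 - s x) with hVdef
      have hν' : ∀ u, ν (z, x, u) = if u = f x then d z x else V := by
        intro u; simp only [hνdef, hVdef]
      have key : (intervention μ ν) (z, x)
          = (∑ u, margU μ u) * V + margU μ (f x) * (d z x - V) := by
        rw [intervention]
        dsimp only
        rw [Finset.sum_mul]
        rw [show (margU μ (f x) * (d z x - V))
            = ∑ u : Γ, (if u = f x then margU μ u * (d z x - V) else 0) by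
          rw [Finset.sum_ite_eq' Finset.univ (f x)
            (fun u => margU μ u * (d z x - V))]
          simp]
        rw [← Finset.sum_add_distrib]
        apply Finset.sum_congr rfl
        intro u _
        rw [hν' u]
        by_cases hu : u = f x <;> simp [hu] <;> ring
      rw [key, hμUsum, hμUf, one_mul]
      by_cases hsx : s x = 1
      · rw [hVdef, if_pos hsx, hsx, hdeg z x hsx]
        ring
      · rw [hVdef, if_neg hsx]
        have hne : (1 : ℝ) - s x ≠ 0 := sub_ne_zero.mpr (fun hh => hsx hh.symm)
        field_simp
        ring
end
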